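/- Let G be a connected graph and H a graph, and let (u1,v1), (u2,v2) be distinct vertices of G[H] with u1 ≡ u2 (u1 = u2 or u1, u2 twins in G). Then: if u1 = u2, R_{G[H]}{(u1,v1),(u2,v2)} = {(u1,v) : v ∈ S_H{v1,v2}}; if N_G[u1] = N_G[u2] (with u1 ≠ u2), it equals {(u1,v) : v ∈ N_{H̄}[v1]} ∪ {(u2,v) : v ∈ N_{H̄}[v2]}, where H̄ is the complement of H; and if N_G(u1) = N_G(u2) (with u1 ≠ u2), it equals {(u1,v) : v ∈ N_H[v1]} ∪ {(u2,v) : v ∈ N_H[v2]}. -/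

import Mathlib

open Finset

variable {α β V : Type*}

/-- The corona product `G ⊙ H`. -/
def SimpleGraph.corona (G : SimpleGraph α) (H : SimpleGraph β) :
    SimpleGraph (α ⊕ α × β) where
  Adj x y :=
    match x, y with
    | Sum.inl u1, Sum.inl u2 => G.Adj u1 u2
    | Sum.inl u1, Sum.inr p => u1 = p.1
    | Sum.inr p, Sum.inl u2 => p.1 = u2
    | Sum.inr p, Sum.inr q => p.1 = q.1 ∧ H.Adj p.2 q.2
  symm := by
    refine ⟨?_⟩
    rintro (u1 | p) (u2 | q) h
    · exact h.symm
    · exact h.symm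
    · exact h.symm
    · exact ⟨h.1.symm, h.2.symm⟩
  loopless := by
    refine ⟨?_⟩
    rintro (u | p) h
    · exact G.irrefl h
    · exact H.irrefl h.2

/-- The lexicographic product `G[H]`. -/
def SimpleGraph.lexProd (G : SimpleGraph α) (H : SimpleGraph β) :
    SimpleGraph (α × β) where
  Adj x y := G.Adj x.1 y.1 ∨ (x.1 = y.1 ∧ H.Adj x.2 y.2)
  symm := by
    refine ⟨?_⟩
    rintro x y (h | ⟨h1, h2⟩)
    · exact Or.inl h.symm
    · exact Or.inr ⟨h1.symm, h2.symm⟩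
  loopless := by
    refine ⟨?_⟩
    rintro x (h | ⟨h1, h2⟩)
    · exact G.irrefl h
    · exact H.irrefl h2

open scoped Classical in
/-- `R_F{x,y}`: the set of vertices resolving `x` and `y` (distance measured by `edist`,
which is `∞` between vertices in different components). -/
noncomputable def resolvingFinset (F : SimpleGraph V) [Fintype V] (x y : V) : Finset V :=
  univ.filter fun z => F.edist x z ≠ F.edist y z

/-- `S_H{v₁,v₂} = {v₁,v₂} ∪ (N_H(v₁) Δ N_H(v₂))`. -/
def locatingFinset (H : SimpleGraph V) [Fintype V] [DecidableEq V]
    [DecidableRel H.Adj] (v1 v2 : V) : Finset V :=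
  {v1, v2} ∪ symmDiff (H.neighborFinset v1) (H.neighborFinset v2)

/-- A resolving function of `F`. -/
def IsResolvingFn (F : SimpleGraph V) [Fintype V] (g : V → ℝ) : Prop :=
  (∀ v, g v ∈ Set.Icc (0 : ℝ) 1) ∧
    ∀ x y : V, x ≠ y → 1 ≤ ∑ z ∈ resolvingFinset F x y, g z

/-- The fractional metric dimension `dim_f(F)`. -/
noncomputable def fracMetricDim (F : SimpleGraph V) [Fintype V] : ℝ :=
  sInf {w | ∃ g, IsResolvingFn F g ∧ w = ∑ v, g v}

/-- A locating function of `H`. -/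
def IsLocatingFn (H : SimpleGraph V) [Fintype V] [DecidableEq V]
    [DecidableRel H.Adj] (g : V → ℝ) : Prop :=
  (∀ v, g v ∈ Set.Icc (0 : ℝ) 1) ∧
    ∀ v1 v2 : V, v1 ≠ v2 → 1 ≤ ∑ v ∈ locatingFinset H v1 v2, g v

/-- `l_f(H)`: the minimum weight of a locating function. -/
noncomputable def fracLoc (H : SimpleGraph V) [Fintype V] [DecidableEq V]
    [DecidableRel H.Adj] : ℝ :=
  sInf {w | ∃ g, IsLocatingFn H g ∧ w = ∑ v, g v}

open scoped Classical in
/-- `λ(H)`: maximum number of common neighbours of two adjacent vertices, `-1` if no edges. -/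
noncomputable def lambdaMax (H : SimpleGraph V) [Fintype V] : ℤ :=
  if hne : (univ.filter fun p : V × V => H.Adj p.1 p.2).Nonempty then
    (univ.filter fun p : V × V => H.Adj p.1 p.2).sup' hne fun p =>
      ((univ.filter fun w => H.Adj p.1 w ∧ H.Adj p.2 w).card : ℤ)
  else -1

open scoped Classical in
/-- `μ(H)`: maximum number of common neighbours of two distinct nonadjacent vertices,
`0` for complete graphs. -/
noncomputable def muMax (H : SimpleGraph V) [Fintype V] : ℤ :=
  if hne : (univ.filter fun p : V × V => p.1 ≠ p.2 ∧ ¬H.Adj p.1 p.2).Nonempty then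
    (univ.filter fun p : V × V => p.1 ≠ p.2 ∧ ¬H.Adj p.1 p.2).sup' hne fun p =>
      ((univ.filter fun w => H.Adj p.1 w ∧ H.Adj p.2 w).card : ℤ)
  else 0

/-- A graph is vertex-transitive if its automorphism group is transitive on vertices. -/
def IsVertexTransitive (H : SimpleGraph V) : Prop :=
  ∀ u v : V, ∃ φ : H ≃g H, φ u = v

/-- Two distinct vertices are twins if they have the same closed or the same open
neighbourhood. -/
def SimpleGraph.Twins (G : SimpleGraph V) (u1 u2 : V) : Prop :=
  u1 ≠ u2 ∧ (insert u1 (G.neighborSet u1) = insert u2 (G.neighborSet u2) ∨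
    G.neighborSet u1 = G.neighborSet u2)

open scoped Classical in
/-- `m₁(G)`: number of vertices in twin-equivalence classes of type 1 (singletons). -/
noncomputable def m1 (G : SimpleGraph V) [Fintype V] : ℕ :=
  (univ.filter fun u => ∀ w, ¬G.Twins u w).card

open scoped Classical in
/-- `m₂(G)`: number of vertices in twin-equivalence classes of type 2 (cliques). -/
noncomputable def m2 (G : SimpleGraph V) [Fintype V] : ℕ :=
  (univ.filter fun u => ∃ w, G.Twins u w ∧ G.Adj u w).card

open scoped Classical in
/-- `m₃(G)`: number of vertices in twin-equivalence classes of type 3 (independent sets). -/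
noncomputable def m3 (G : SimpleGraph V) [Fintype V] : ℕ :=
  (univ.filter fun u => ∃ w, G.Twins u w ∧ ¬G.Adj u w).card

/-!
In `G[H]` two vertices in different fibres are at the `G`-distance of their fibres, while two
vertices of the fibre over a non-isolated `u` are at distance `0`, `1` or `2` according as they
are equal, adjacent in `H`, or neither (a detour through a neighbour of `u` has length `2`).
If `u₁ ≡ u₂`, every vertex of `G` other than `u₁, u₂` is equidistant from them, so only the
fibres over `u₁` and `u₂` can resolve. For `u₁ = u₂` one compares the two in-fibre distances;
for twins `u₁ ≠ u₂` one compares the in-fibre distance with `d_G(u₁,u₂)`, which is `1` for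
closed and `2` for open twins.
-/

namespace SimpleGraph

variable {W : Type*} {G : SimpleGraph α} {H : SimpleGraph β}

lemma Walk.edist_le_length_of_edist_adj_le_one {G' : SimpleGraph W} {f : V → W}
    {F : SimpleGraph V} (hf : ∀ ⦃x y⦄, F.Adj x y → G'.edist (f x) (f y) ≤ 1) {x y : V}
    (p : F.Walk x y) : G'.edist (f x) (f y) ≤ p.length := by
  induction p with
  | nil => simp
  | @cons u v w h p ih =>
    calc G'.edist (f u) (f w) ≤ G'.edist (f u) (f v) + G'.edist (f v) (f w) :=
          SimpleGraph.edist_triangle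
      _ ≤ 1 + p.length := add_le_add (hf h) ih
      _ = (p.cons h).length := by rw [Walk.length_cons, add_comm]; push_cast; rfl

lemma edist_le_edist_of_edist_adj_le_one {G' : SimpleGraph W} {f : V → W} {F : SimpleGraph V}
    (hf : ∀ ⦃x y⦄, F.Adj x y → G'.edist (f x) (f y) ≤ 1) (x y : V) :
    G'.edist (f x) (f y) ≤ F.edist x y :=
  le_sInf <| Set.forall_mem_range.2 fun p => p.edist_le_length_of_edist_adj_le_one hf

lemma edist_fst_le_edist_lexProd (x y : α × β) : G.edist x.1 y.1 ≤ (G.lexProd H).edist x y :=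
  edist_le_edist_of_edist_adj_le_one (F := G.lexProd H) (f := Prod.fst)
    (fun _ _ h => edist_le_one_iff_adj_or_eq.2 <| h.imp id And.left) x y

lemma edist_lexProd_of_fst_ne {u u' : α} (v v' : β) (h : u ≠ u') :
    (G.lexProd H).edist (u, v) (u', v') = G.edist u u' := by
  refine le_antisymm ?_ (edist_fst_le_edist_lexProd (u, v) (u', v'))
  rcases eq_or_ne (G.edist u u') ⊤ with htop | htop
  · simp [htop]
  obtain ⟨p, hp⟩ := exists_walk_of_edist_ne_top htop
  obtain ⟨a, hua, q, rfl⟩ := Walk.exists_eq_cons_of_ne h p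
  let f : G →g G.lexProd H := ⟨(·, v'), Or.inl⟩
  have hwalk := edist_le (Walk.cons (show (G.lexProd H).Adj (u, v) (a, v') from Or.inl hua)
    (q.map f))
  rwa [Walk.length_cons, Walk.length_map, ← Walk.length_cons hua, hp] at hwalk

lemma edist_le_edist_of_neighborSet_subset {u u' w : α}
    (h : G.neighborSet u ⊆ insert u' (G.neighborSet u')) (hw : w ≠ u) :
    G.edist u' w ≤ G.edist u w := by
  rcases eq_or_ne (G.edist u w) ⊤ with htop | htop
  · simp [htop]
  obtain ⟨p, hp⟩ := exists_walk_of_edist_ne_top htop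
  obtain ⟨a, hua, q, rfl⟩ := Walk.exists_eq_cons_of_ne hw.symm p
  rw [← hp, Walk.length_cons]
  rcases h hua with rfl | hu'a
  · exact (edist_le q).trans (by exact_mod_cast Nat.le_succ _)
  · exact_mod_cast edist_le (Walk.cons hu'a q)

lemma edist_eq_edist_of_neighborSet_subset {u1 u2 w : α}
    (h12 : G.neighborSet u1 ⊆ insert u2 (G.neighborSet u2))
    (h21 : G.neighborSet u2 ⊆ insert u1 (G.neighborSet u1)) (hw1 : w ≠ u1) (hw2 : w ≠ u2) :
    G.edist u1 w = G.edist u2 w :=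
  le_antisymm (edist_le_edist_of_neighborSet_subset h21 hw2)
    (edist_le_edist_of_neighborSet_subset h12 hw1)

lemma adj_of_insert_neighborSet_eq {u1 u2 : α} (hne : u1 ≠ u2)
    (h : insert u1 (G.neighborSet u1) = insert u2 (G.neighborSet u2)) : G.Adj u1 u2 := by
  have hu2 : u2 ∈ insert u1 (G.neighborSet u1) := h ▸ Set.mem_insert u2 _
  exact hu2.resolve_left hne.symm

lemma edist_eq_two_of_neighborSet_eq {u1 u2 : α} (hne : u1 ≠ u2) (hu1 : ¬G.IsIsolated u1)
    (h : G.neighborSet u1 = G.neighborSet u2) : G.edist u1 u2 = 2 := by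
  obtain ⟨a, hua⟩ := exists_adj_iff_not_isIsolated.2 hu1
  have hnadj : ¬G.Adj u1 u2 := fun hadj =>
    G.irrefl (show u2 ∈ G.neighborSet u2 from h ▸ hadj)
  have hu2a : a ∈ G.neighborSet u2 := h ▸ hua
  exact edist_eq_two_iff.2 ⟨hne, hnadj, ⟨a, (mem_commonNeighbors _).2 ⟨hua, hu2a⟩⟩⟩

variable [DecidableEq β] [DecidableRel H.Adj]

variable (H) in
def lexFiberEdist (v x : β) : ℕ∞ :=
  if x = v then 0 else if H.Adj v x then 1 else 2

lemma edist_lexProd_of_fst_eq {u : α} (hu : ¬G.IsIsolated u) (v x : β) :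
    (G.lexProd H).edist (u, v) (u, x) = H.lexFiberEdist v x := by
  unfold lexFiberEdist
  split_ifs with hxv hvx
  · rw [hxv, edist_self]
  · exact edist_eq_one_iff_adj.2 (Or.inr ⟨rfl, hvx⟩)
  · obtain ⟨a, hua⟩ := exists_adj_iff_not_isIsolated.2 hu
    refine edist_eq_two_iff.2 ⟨by simp [Ne.symm hxv], ?_, ⟨(a, v), ?_⟩⟩
    · rintro (huu | ⟨-, hvx'⟩)
      exacts [G.irrefl huu, hvx hvx']
    · exact (mem_commonNeighbors _).2 ⟨Or.inl hua, Or.inl hua⟩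

lemma lexFiberEdist_ne_iff_mem_locatingFinset [Fintype β] {v1 v2 : β} (hv : v1 ≠ v2) (x : β) :
    H.lexFiberEdist v1 x ≠ H.lexFiberEdist v2 x ↔ x ∈ locatingFinset H v1 v2 := by
  unfold lexFiberEdist
  simp only [locatingFinset, mem_union, mem_insert, mem_singleton, mem_symmDiff,
    mem_neighborFinset]
  split_ifs <;> simp_all

lemma filter_lexFiberEdist_ne_one [Fintype β] (v : β) :
    univ.filter (fun x => H.lexFiberEdist v x ≠ 1) = insert v (Hᶜ.neighborFinset v) := by
  ext x
  unfold lexFiberEdist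
  simp only [mem_filter, mem_univ, true_and, mem_insert, mem_neighborFinset, compl_adj]
  split_ifs <;> simp_all [eq_comm]

lemma filter_lexFiberEdist_ne_two [Fintype β] (v : β) :
    univ.filter (fun x => H.lexFiberEdist v x ≠ 2) = insert v (H.neighborFinset v) := by
  ext x
  unfold lexFiberEdist
  simp only [mem_filter, mem_univ, true_and, mem_insert, mem_neighborFinset]
  split_ifs <;> simp_all

variable [DecidableEq α] [Fintype α] [Fintype β]

lemma resolvingFinset_lexProd_of_fst_eq {u : α} (hu : ¬G.IsIsolated u) {v1 v2 : β}
    (hv : v1 ≠ v2) :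
    resolvingFinset (G.lexProd H) (u, v1) (u, v2) = (locatingFinset H v1 v2).image (u, ·) := by
  ext ⟨w, x⟩
  simp only [resolvingFinset, mem_filter, mem_univ, true_and, mem_image, Prod.mk.injEq]
  by_cases hw : w = u
  · subst hw
    simp [edist_lexProd_of_fst_eq hu, lexFiberEdist_ne_iff_mem_locatingFinset hv]
  · simp [edist_lexProd_of_fst_ne _ _ (Ne.symm hw), Ne.symm hw]

lemma resolvingFinset_lexProd_of_neighborSet_subset {u1 u2 : α} (hne : u1 ≠ u2)
    (hu1 : ¬G.IsIsolated u1) (hu2 : ¬G.IsIsolated u2)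
    (h12 : G.neighborSet u1 ⊆ insert u2 (G.neighborSet u2))
    (h21 : G.neighborSet u2 ⊆ insert u1 (G.neighborSet u1)) (v1 v2 : β) :
    resolvingFinset (G.lexProd H) (u1, v1) (u2, v2) =
      (univ.filter fun x => H.lexFiberEdist v1 x ≠ G.edist u1 u2).image (u1, ·) ∪
        (univ.filter fun x => H.lexFiberEdist v2 x ≠ G.edist u1 u2).image (u2, ·) := by
  ext ⟨w, x⟩
  simp only [resolvingFinset, mem_filter, mem_univ, true_and, mem_union, mem_image,
    Prod.mk.injEq]
  by_cases hw1 : w = u1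
  · subst hw1
    simp [edist_lexProd_of_fst_eq hu1, edist_lexProd_of_fst_ne _ _ hne.symm, edist_comm, hne.symm]
  by_cases hw2 : w = u2
  · subst hw2
    simp [edist_lexProd_of_fst_eq hu2, edist_lexProd_of_fst_ne _ _ hne, hne, eq_comm]
  simp [edist_lexProd_of_fst_ne _ _ (Ne.symm hw1), edist_lexProd_of_fst_ne _ _ (Ne.symm hw2),
    edist_eq_edist_of_neighborSet_subset h12 h21 hw1 hw2, Ne.symm hw1, Ne.symm hw2]

end SimpleGraph

theorem stmt_13_general {α β : Type*} [Fintype α] [Fintype β] [DecidableEq α] [DecidableEq β]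
    (G : SimpleGraph α) (H : SimpleGraph β) [DecidableRel G.Adj] [DecidableRel H.Adj]
    (hG : G.Connected) (hca : 2 ≤ Fintype.card α)
    (u1 u2 : α) (v1 v2 : β) (hne : (u1, v1) ≠ (u2, v2)) :
    (u1 = u2 →
      resolvingFinset (G.lexProd H) (u1, v1) (u2, v2) =
        (locatingFinset H v1 v2).image fun v => (u1, v)) ∧
    (u1 ≠ u2 → insert u1 (G.neighborFinset u1) = insert u2 (G.neighborFinset u2) →
      resolvingFinset (G.lexProd H) (u1, v1) (u2, v2) =
        ((insert v1 (Hᶜ.neighborFinset v1)).image fun v => (u1, v)) ∪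
          ((insert v2 (Hᶜ.neighborFinset v2)).image fun v => (u2, v))) ∧
    (u1 ≠ u2 → G.neighborFinset u1 = G.neighborFinset u2 →
      resolvingFinset (G.lexProd H) (u1, v1) (u2, v2) =
        ((insert v1 (H.neighborFinset v1)).image fun v => (u1, v)) ∪
          ((insert v2 (H.neighborFinset v2)).image fun v => (u2, v))) := by
  have : Nontrivial α := Fintype.one_lt_card_iff_nontrivial.1 hca
  have hiso : ∀ u, ¬G.IsIsolated u := hG.preconnected.not_isIsolated
  refine ⟨?_, fun hu hN => ?_, fun hu hN => ?_⟩
  · rintro rfl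
    exact SimpleGraph.resolvingFinset_lexProd_of_fst_eq (hiso u1) fun hv => hne (hv ▸ rfl)
  · have hN' : insert u1 (G.neighborSet u1) = insert u2 (G.neighborSet u2) := by
      simpa using congrArg ((↑) : Finset α → Set α) hN
    rw [SimpleGraph.resolvingFinset_lexProd_of_neighborSet_subset hu (hiso u1) (hiso u2)
      ((Set.subset_insert _ _).trans hN'.subset) ((Set.subset_insert _ _).trans hN'.symm.subset),
      SimpleGraph.edist_eq_one_iff_adj.2 (SimpleGraph.adj_of_insert_neighborSet_eq hu hN'),
      SimpleGraph.filter_lexFiberEdist_ne_one, SimpleGraph.filter_lexFiberEdist_ne_one]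
  · have hN' : G.neighborSet u1 = G.neighborSet u2 := by
      simpa using congrArg ((↑) : Finset α → Set α) hN
    rw [SimpleGraph.resolvingFinset_lexProd_of_neighborSet_subset hu (hiso u1) (hiso u2)
      (hN'.subset.trans (Set.subset_insert _ _)) (hN'.symm.subset.trans (Set.subset_insert _ _)),
      SimpleGraph.edist_eq_two_of_neighborSet_eq hu (hiso u1) hN',
      SimpleGraph.filter_lexFiberEdist_ne_two, SimpleGraph.filter_lexFiberEdist_ne_two]

/-- Description of `R_{G[H]}{(u₁,v₁),(u₂,v₂)}` when `u₁ ≡ u₂`: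
if `u₁ = u₂` it is `{u₁} × S_H{v₁,v₂}`; if `N_G[u₁] = N_G[u₂]` (`u₁ ≠ u₂`) it is
`({u₁} × N_{H̄}[v₁]) ∪ ({u₂} × N_{H̄}[v₂])`; if `N_G(u₁) = N_G(u₂)` (`u₁ ≠ u₂`) it is
`({u₁} × N_H[v₁]) ∪ ({u₂} × N_H[v₂])`. -/
theorem stmt_13 {α β : Type*} [Fintype α] [Fintype β] [DecidableEq α] [DecidableEq β]
    (G : SimpleGraph α) (H : SimpleGraph β) [DecidableRel G.Adj] [DecidableRel H.Adj]
    (hG : G.Connected) (hca : 2 ≤ Fintype.card α) (hcb : 2 ≤ Fintype.card β)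
    (u1 u2 : α) (v1 v2 : β) (hne : (u1, v1) ≠ (u2, v2)) :
    (u1 = u2 →
      resolvingFinset (G.lexProd H) (u1, v1) (u2, v2) =
        (locatingFinset H v1 v2).image fun v => (u1, v)) ∧
    (u1 ≠ u2 → insert u1 (G.neighborFinset u1) = insert u2 (G.neighborFinset u2) →
      resolvingFinset (G.lexProd H) (u1, v1) (u2, v2) =
        ((insert v1 (Hᶜ.neighborFinset v1)).image fun v => (u1, v)) ∪
          ((insert v2 (Hᶜ.neighborFinset v2)).image fun v => (u2, v))) ∧
    (u1 ≠ u2 → G.neighborFinset u1 = G.neighborFinset u2 →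
      resolvingFinset (G.lexProd H) (u1, v1) (u2, v2) =
        ((insert v1 (H.neighborFinset v1)).image fun v => (u1, v)) ∪
          ((insert v2 (H.neighborFinset v2)).image fun v => (u2, v))) :=
  stmt_13_general G H hG hca u1 u2 v1 v2 hne
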